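/- arXiv:2307.09453 — 3 statements merged into one kernel-verified Lean document; each statement's English description precedes it below -/
import Mathlib

section
/- Let N ≥ 3 be odd and let (S,E) be the cycle of length N (S = Z/NZ with edges {i,i+1}). Then for every B in phi (i.e., every finite set B of elements of Cal_I^1 satisfying (P0) and (P1)), one has supp(B) ≠ S. -/
/-- The induced subgraph of `adj` on `I` is a path (type `A_m`, `m ≥ 1`):
there is an injective enumeration `f : Fin (m+1) → S` of `I` such that two
elements of `I` are adjacent iff they are consecutive in the enumeration. -/
def IsPathOn {S : Type} [DecidableEq S] (adj : S → S → Prop) (I : Finset S) : Prop :=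
  ∃ (m : ℕ) (f : Fin (m + 1) → S), Function.Injective f ∧
    I = Finset.image f Finset.univ ∧
    ∀ i j : Fin (m + 1), adj (f i) (f j) ↔ ((i : ℕ) + 1 = (j : ℕ) ∨ (j : ℕ) + 1 = (i : ℕ))

/-- The induced subgraph of `adj` on `I` is connected. -/
def ConnOn {S : Type} (adj : S → S → Prop) (I : Finset S) : Prop :=
  ∀ s ∈ I, ∀ t ∈ I, Relation.ReflTransGen (fun a b => a ∈ I ∧ b ∈ I ∧ adj a b) s t

/-- `I ∈ Cal_I^1`: the induced subgraph on `I` is a path and `|I|` is odd. -/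
def CalI1 {S : Type} [DecidableEq S] (adj : S → S → Prop) (I : Finset S) : Prop :=
  IsPathOn adj I ∧ Odd I.card

/-- `I ≺ I'`. -/
def Prec {S : Type} [DecidableEq S] (adj : S → S → Prop) (I I' : Finset S) : Prop :=
  I ⊂ I' ∧ ¬ ConnOn adj (I' \ I)

/-- `I ♠ I'`. -/
def Spade {S : Type} [DecidableEq S] (adj : S → S → Prop) (I I' : Finset S) : Prop :=
  I ∩ I' = ∅ ∧ ¬ ConnOn adj (I ∪ I')

/-- `I^{ev}`: the set of `s ∈ I` such that `I ∖ {s}` is the disjoint union of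
`I', I'' ∈ Cal_I^1` with `I' ♠ I''`. -/
def Iev {S : Type} [DecidableEq S] (adj : S → S → Prop) (I : Finset S) : Set S :=
  {s | s ∈ I ∧ ∃ I' I'' : Finset S, CalI1 adj I' ∧ CalI1 adj I'' ∧
    Spade adj I' I'' ∧ I.erase s = I' ∪ I''}

/-- Property (P0). -/
def P0 {S : Type} [DecidableEq S] (adj : S → S → Prop) (B : Finset (Finset S)) : Prop :=
  ∀ I ∈ B, ∀ I' ∈ B, I = I' ∨ Spade adj I I' ∨ Prec adj I I' ∨ Prec adj I' I

/-- Property (P1). -/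
def P1 {S : Type} [DecidableEq S] (adj : S → S → Prop) (B : Finset (Finset S)) : Prop :=
  ∀ I ∈ B, ∃ (k : ℕ) (f : Fin k → Finset S),
    (∀ j, f j ∈ B ∧ Prec adj (f j) I) ∧
    (∀ j j', j ≠ j' → Disjoint (f j) (f j')) ∧
    Iev adj I ⊆ ⋃ j, ((f j : Finset S) : Set S)

/-- `phi`: finite sets `B` of elements of `Cal_I^1` satisfying (P0) and (P1). -/
def phiSet {S : Type} [DecidableEq S] (adj : S → S → Prop) : Set (Finset (Finset S)) :=
  {B | (∀ I ∈ B, CalI1 adj I) ∧ P0 adj B ∧ P1 adj B}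

/-- `supp(B)`. -/
def suppB {S : Type} [DecidableEq S] (B : Finset (Finset S)) : Finset S := B.biUnion id

/-- `g_s(B)`. -/
def gs {S : Type} [DecidableEq S] (B : Finset (Finset S)) (s : S) : ℕ :=
  (B.filter (fun I => s ∈ I)).card

/-- `e_I = ∑_{s ∈ I} e_s`. -/
def eSum {S : Type} {V : Type} [AddCommGroup V] [Module (ZMod 2) V]
    (e : S → V) (I : Finset S) : V := ∑ s ∈ I, e s

/-- `L_B`: the `F`-span of `{e_I : I ∈ B}`. -/
def LB {S : Type} {V : Type} [AddCommGroup V] [Module (ZMod 2) V]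
    (e : S → V) (B : Finset (Finset S)) : Submodule (ZMod 2) V :=
  Submodule.span (ZMod 2) ((fun I => eSum e I) '' (B : Set (Finset S)))

/-- `eps(B) = ∑_{s ∈ S} ((g_s(B)(g_s(B)+1)/2) mod 2) e_s`. -/
def epsB {S : Type} [DecidableEq S] [Fintype S] {V : Type} [AddCommGroup V]
    [Module (ZMod 2) V] (e : S → V) (B : Finset (Finset S)) : V :=
  ∑ s : S, ((gs B s * (gs B s + 1) / 2 : ℕ) : ZMod 2) • e s

/-- The triple `(V, <,>, e)` (with graph `adj`) is perfect. -/
def IsPerfect {S : Type} [DecidableEq S] [Fintype S] {V : Type} [AddCommGroup V]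
    [Module (ZMod 2) V] (adj : S → S → Prop) (e : S → V) : Prop :=
  (∀ B ∈ phiSet adj,
      (LinearIndependent (ZMod 2) (fun I : {I : Finset S // I ∈ B} => eSum e I.1)) ∧
      (∀ I : Finset S, CalI1 adj I → (eSum e I ∈ LB e B ↔ I ∈ B))) ∧
  (∀ B ∈ phiSet adj, epsB e B ∈ LB e B) ∧
  Set.BijOn (epsB e) (phiSet adj) (⋃ B ∈ phiSet adj, ((LB e B : Submodule (ZMod 2) V) : Set V)) ∧
  (∀ B ∈ phiSet adj, ∀ B' ∈ phiSet adj, epsB e B' ∈ LB e B → ∀ s : S, gs B' s ≤ gs B s)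
/-- Adjacency of the cycle of length `N` on `S = ZMod N`. -/
def cadj (N : ℕ) (i j : ZMod N) : Prop := j = i + 1 ∨ i = j + 1

/-- `V = F^S` for `S = ZMod N`. -/
abbrev Vc (N : ℕ) := ZMod N → ZMod 2

/-- The standard basis vector `e_s`. -/
def eVec (N : ℕ) (s : ZMod N) : Vc N := Pi.single s 1

/-- The line `F·e_S`, where `e_S = ∑_{s ∈ S} e_s`. -/
def radN (N : ℕ) [NeZero N] : Submodule (ZMod 2) (Vc N) :=
  Submodule.span (ZMod 2) {eSum (eVec N) Finset.univ}

/-- `Vbar = V / (F·e_S)`. -/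
abbrev VbarN (N : ℕ) [NeZero N] := Vc N ⧸ radN N

/-- The quotient map `pi : V → Vbar`. -/
def piQ (N : ℕ) [NeZero N] : Vc N →ₗ[ZMod 2] VbarN N := (radN N).mkQ

/-- `ebar_s = pi(e_s)`. -/
def ebar (N : ℕ) [NeZero N] (s : ZMod N) : VbarN N := piQ N (eVec N s)
open scoped Classical in
/-- The connected component of `s` in the induced subgraph of `adj` on `I`. -/
noncomputable def compOf {S : Type} [DecidableEq S] (adj : S → S → Prop)
    (I : Finset S) (s : S) : Finset S :=
  I.filter (fun t => Relation.ReflTransGen (fun a b => a ∈ I ∧ b ∈ I ∧ adj a b) s t)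

/-- `c(I)`: the set of vertex sets of connected components of the induced subgraph on `I`. -/
noncomputable def comps {S : Type} [DecidableEq S] (adj : S → S → Prop)
    (I : Finset S) : Finset (Finset S) :=
  I.image (compOf adj I)

/-- `|c^0(I)|`: the number of connected components of even cardinality. -/
noncomputable def c0card {S : Type} [DecidableEq S] (adj : S → S → Prop)
    (I : Finset S) : ℕ :=
  ((comps adj I).filter (fun C => Even C.card)).card

/-- `V_0 = {e_I : I ⊊ S with |c^0(I)| even}`. -/
def V0set (N : ℕ) [NeZero N] : Set (Vc N) :=
  {v | ∃ I : Finset (ZMod N), I ≠ Finset.univ ∧ Even (c0card (cadj N) I) ∧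
    v = eSum (eVec N) I}

/-- `V_1 = {e_S} ∪ {e_I : ∅ ≠ I ⊊ S with |c^0(I)| odd}`. -/
def V1set (N : ℕ) [NeZero N] : Set (Vc N) :=
  {v | v = eSum (eVec N) Finset.univ ∨ ∃ I : Finset (ZMod N), I ≠ ∅ ∧ I ≠ Finset.univ ∧
    Odd (c0card (cadj N) I) ∧ v = eSum (eVec N) I}
open scoped Classical in
/-- `I^{odd} = I ∖ I^{ev}` (as a `Finset`). -/
noncomputable def IoddF {S : Type} [DecidableEq S] (adj : S → S → Prop)
    (I : Finset S) : Finset S :=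
  I.filter (fun s => s ∉ Iev adj I)

/-- `n_B = |{I ∈ B : ee ⊆ I}|`. -/
def nB {S : Type} [DecidableEq S] (ee : Finset S) (B : Finset (Finset S)) : ℕ :=
  (B.filter (fun I => ee ⊆ I)).card

open scoped Classical in
/-- `B ↦ B^!`: remove the unique `I_B ∈ B` with `|I_B ∩ ee| = 1` when `n_B` is odd;
leave `B` unchanged when `n_B` is even. -/
noncomputable def bangF {S : Type} [DecidableEq S] (ee : Finset S)
    (B : Finset (Finset S)) : Finset (Finset S) :=
  if h : Odd (nB ee B) ∧ ∃ I ∈ B, (I ∩ ee).card = 1 then B.erase h.2.choose else B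

/-- `omega = {B^! : B ∈ phi}`. -/
def omegaSet {S : Type} [DecidableEq S] (adj : S → S → Prop) (ee : Finset S) :
    Set (Finset (Finset S)) :=
  (bangF ee) '' (phiSet adj)

open scoped Classical in
/-- `Btilde`: the unique element of `phi` with `Btilde^! = B`. -/
noncomputable def tildeF {S : Type} [DecidableEq S] (adj : S → S → Prop) (ee : Finset S)
    (C : Finset (Finset S)) : Finset (Finset S) :=
  if h : ∃ B ∈ phiSet adj, bangF ee B = C then h.choose else ∅

/-- `'eps(B) = eps(Btilde)`. -/
noncomputable def epsO {S : Type} [DecidableEq S] [Fintype S] {V : Type} [AddCommGroup V]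
    [Module (ZMod 2) V] (adj : S → S → Prop) (ee : Finset S) (e : S → V)
    (C : Finset (Finset S)) : V :=
  epsB e (tildeF adj ee C)

/-- `B' ⪯ B` on `omega`. -/
def preceqO {S : Type} [DecidableEq S] [Fintype S] {V : Type} [AddCommGroup V]
    [Module (ZMod 2) V] (adj : S → S → Prop) (ee : Finset S) (e : S → V)
    (B' B : Finset (Finset S)) : Prop :=
  ∃ (k : ℕ) (c : ℕ → Finset (Finset S)), c 0 = B' ∧ c k = B ∧
    (∀ i ≤ k, c i ∈ omegaSet adj ee) ∧
    (∀ i < k, epsO adj ee e (c i) ∈ LB e (c (i + 1)))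

/-- The linear form `v ↦ v t + v t'` on `V`. -/
def zeeV (N : ℕ) (t t' : ZMod N) : Vc N →ₗ[ZMod 2] ZMod 2 :=
  (LinearMap.proj t : Vc N →ₗ[ZMod 2] ZMod 2) + (LinearMap.proj t' : Vc N →ₗ[ZMod 2] ZMod 2)

/-- `z_ee : Vbar → F`, the linear map with `z_ee(ebar_s) = 1` iff `s ∈ ee = {t,t'}`. -/
noncomputable def zee (N : ℕ) [NeZero N] (t t' : ZMod N) : VbarN N →ₗ[ZMod 2] ZMod 2 :=
  Submodule.liftQ (radN N) (zeeV N t t') (by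
    rw [radN, Submodule.span_le, Set.singleton_subset_iff]
    have h1 : ∀ u : ZMod N, (eSum (eVec N) Finset.univ) u = 1 := by
      intro u
      simp [eSum, eVec, Finset.sum_apply, Finset.sum_pi_single]
    simp only [SetLike.mem_coe, LinearMap.mem_ker, zeeV, LinearMap.add_apply,
      LinearMap.proj_apply, h1]
    decide)
/-- The maximal elements of a finite family of finsets, under inclusion. -/
def maxElts {S : Type} [DecidableEq S] (C : Finset (Finset S)) : Finset (Finset S) :=
  C.filter (fun I => ∀ I' ∈ C, ¬ I ⊂ I')

/-- `restB B k = B ∖ (B_1 ∪ … ∪ B_k)`: what remains of `B` after removing the first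
`k` layers; the `k`-th layer (`k ≥ 1`) is `B_k = maxElts (restB B (k-1))`. -/
def restB {S : Type} [DecidableEq S] (B : Finset (Finset S)) : ℕ → Finset (Finset S)
  | 0 => B
  | k + 1 => restB B k \ maxElts (restB B k)

/-- The relation `B' ≤ B` on `phi(V)`. -/
def lePhi {S : Type} [DecidableEq S] [Fintype S] {V : Type} [AddCommGroup V]
    [Module (ZMod 2) V] (adj : S → S → Prop) (e : S → V)
    (B' B : Finset (Finset S)) : Prop :=
  ∃ (k : ℕ) (c : ℕ → Finset (Finset S)), c 0 = B' ∧ c k = B ∧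
    (∀ i ≤ k, c i ∈ phiSet adj) ∧
    (∀ i < k, epsB e (c i) ∈ LB e (c (i + 1)))

/-! A member `I` of `B` of maximal size is a path, so it is not the whole cycle and some `t ∈ I`
has `t + 1 ∉ I`. If `supp(B) = S`, some `J ∈ B` contains `t + 1`, and no alternative of (P0) holds
for `I, J`: `I ♠ J` fails since `t` and `t + 1` are adjacent, `I ≺ J` contradicts maximality, and
`J ≺ I` would put `t + 1` in `I`. -/

section Graph

variable {S : Type} {adj : S → S → Prop}

lemma ConnOn.reflTransGen_of_subset {I K : Finset S} (h : ConnOn adj I) (hIK : I ⊆ K)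
    {s t : S} (hs : s ∈ I) (ht : t ∈ I) :
    Relation.ReflTransGen (fun a b => a ∈ K ∧ b ∈ K ∧ adj a b) s t :=
  Relation.ReflTransGen.mono (fun _ _ ⟨ha, hb, hab⟩ => ⟨hIK ha, hIK hb, hab⟩) _ _ (h s hs t ht)

variable [DecidableEq S]

lemma IsPathOn.connOn {I : Finset S} (h : IsPathOn adj I) : ConnOn adj I := by
  obtain ⟨m, f, -, rfl, hadj⟩ := h
  set r := fun a b => a ∈ Finset.image f Finset.univ ∧ b ∈ Finset.image f Finset.univ ∧ adj a b
  have hmem : ∀ i, f i ∈ Finset.image f Finset.univ := fun i =>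
    Finset.mem_image_of_mem f (Finset.mem_univ i)
  have from_zero : ∀ n (hn : n < m + 1), Relation.ReflTransGen r (f 0) (f ⟨n, hn⟩) := by
    intro n
    induction n with
    | zero => exact fun _ => .refl
    | succ k ih =>
      intro hn
      exact (ih (by omega)).tail ⟨hmem _, hmem _, (hadj ⟨k, by omega⟩ ⟨k + 1, hn⟩).2 (.inl rfl)⟩
  have to_zero : ∀ n (hn : n < m + 1), Relation.ReflTransGen r (f ⟨n, hn⟩) (f 0) := by
    intro n
    induction n with
    | zero => exact fun _ => .refl
    | succ k ih =>
      intro hn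
      exact .head ⟨hmem _, hmem _, (hadj ⟨k + 1, hn⟩ ⟨k, by omega⟩).2 (.inr rfl)⟩ (ih (by omega))
  intro s hs t ht
  obtain ⟨i, -, rfl⟩ := Finset.mem_image.1 hs
  obtain ⟨j, -, rfl⟩ := Finset.mem_image.1 ht
  exact (to_zero i i.2).trans (from_zero j j.2)

lemma IsPathOn.exists_endpoint {I : Finset S} (h : IsPathOn adj I) :
    ∃ x ∈ I, ∀ y ∈ I, ∀ z ∈ I, adj x y → adj x z → y = z := by
  obtain ⟨m, f, -, rfl, hadj⟩ := h
  refine ⟨f 0, Finset.mem_image_of_mem f (Finset.mem_univ 0), ?_⟩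
  simp only [Finset.mem_image, Finset.mem_univ, true_and]
  rintro _ ⟨i, rfl⟩ _ ⟨j, rfl⟩ hi hj
  have hi := (hadj 0 i).1 hi
  have hj := (hadj 0 j).1 hj
  simp only [Fin.val_zero] at hi hj
  exact congrArg f (Fin.ext (by omega))

lemma ConnOn.union [Std.Symm adj] {I J : Finset S} (hI : ConnOn adj I)
    (hJ : ConnOn adj J) {a b : S} (ha : a ∈ I) (hb : b ∈ J) (hab : adj a b) :
    ConnOn adj (I ∪ J) := by
  set r := fun x y => x ∈ I ∪ J ∧ y ∈ I ∪ J ∧ adj x y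
  have : Std.Symm r := ⟨fun _ _ ⟨hx, hy, hxy⟩ => ⟨hy, hx, Std.Symm.symm _ _ hxy⟩⟩
  have to_a : ∀ x ∈ I ∪ J, Relation.ReflTransGen r x a := by
    intro x hx
    rcases Finset.mem_union.1 hx with hx | hx
    · exact hI.reflTransGen_of_subset Finset.subset_union_left hx ha
    · refine (hJ.reflTransGen_of_subset Finset.subset_union_right hx hb).tail ?_
      exact ⟨Finset.mem_union_right _ hb, Finset.mem_union_left _ ha, Std.Symm.symm _ _ hab⟩
  intro x hx y hy
  exact (to_a x hx).trans (Std.Symm.symm _ _ (to_a y hy))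

end Graph

lemma mem_suppB {S : Type} [DecidableEq S] {B : Finset (Finset S)} {s : S} :
    s ∈ suppB B ↔ ∃ I ∈ B, s ∈ I := by
  simp [suppB]

instance (N : ℕ) : Std.Symm (cadj N) := ⟨fun _ _ h => h.symm⟩

section Cycle

variable {N : ℕ} [NeZero N]

lemma not_isPathOn_univ (hN : 3 ≤ N) : ¬ IsPathOn (cadj N) Finset.univ := by
  intro h
  obtain ⟨x, -, hx⟩ := h.exists_endpoint
  have hsucc_pred : x + 1 = x - 1 :=
    hx _ (Finset.mem_univ _) _ (Finset.mem_univ _) (.inl rfl) (.inr (by ring))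
  have htwo : ((2 : ℕ) : ZMod N) = 0 := by push_cast; linear_combination hsucc_pred
  have := Nat.le_of_dvd two_pos ((ZMod.natCast_eq_zero_iff 2 N).1 htwo)
  omega

lemma exists_mem_add_one_notMem {I : Finset (ZMod N)} (hne : I.Nonempty)
    (hI : I ≠ Finset.univ) : ∃ t ∈ I, t + 1 ∉ I := by
  by_contra! hclosed
  obtain ⟨t₀, ht₀⟩ := hne
  have hshift : ∀ n : ℕ, t₀ + n ∈ I := by
    intro n
    induction n with
    | zero => simpa using ht₀
    | succ n ih => simpa [add_assoc] using hclosed _ ih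
  refine hI (Finset.eq_univ_of_forall fun x => ?_)
  simpa using hshift (x - t₀).val

end Cycle

theorem statement4_general (N : ℕ) [NeZero N] (hN : 3 ≤ N)
    (B : Finset (Finset (ZMod N))) (hB : B ∈ phiSet (cadj N)) :
    suppB B ≠ Finset.univ := by
  obtain ⟨hpath, hP0, -⟩ := hB
  intro hsupp
  have hcover : ∀ s, ∃ I ∈ B, s ∈ I := fun s => mem_suppB.1 (hsupp ▸ Finset.mem_univ s)
  obtain ⟨I₀, hI₀, -⟩ := hcover 0
  obtain ⟨I, hIB, hmax⟩ := B.exists_max_image Finset.card ⟨I₀, hI₀⟩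
  have hIuniv : I ≠ Finset.univ := fun h => not_isPathOn_univ hN (h ▸ (hpath I hIB).1)
  obtain ⟨t, htI, ht⟩ := exists_mem_add_one_notMem (Finset.card_pos.1 (hpath I hIB).2.pos) hIuniv
  obtain ⟨J, hJB, htJ⟩ := hcover (t + 1)
  rcases hP0 I hIB J hJB with rfl | hspade | hIJ | hJI
  · exact ht htJ
  · exact hspade.2 <| (hpath I hIB).1.connOn.union (hpath J hJB).1.connOn
      htI htJ (.inl rfl)
  · exact (hmax J hJB).not_gt (Finset.card_lt_card hIJ.1)
  · exact ht (hJI.1.1 htJ)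

/-- on the cycle of length `N`, every `B ∈ phi` has `supp(B) ≠ S`. -/
theorem statement4 (N : ℕ) [NeZero N] (hN : 3 ≤ N) (hodd : Odd N)
    (B : Finset (Finset (ZMod N))) (hB : B ∈ phiSet (cadj N)) :
    suppB B ≠ Finset.univ :=
  statement4_general N hN B hB
end

section
/- Let N ≥ 3 be odd and let (S,E) be the cycle of length N. For every I ⊆ S with ∅ ≠ I ⊊ S, the number |c^0(I)| + |c^0(S∖I)| is odd. Consequently e_I lies in V_0 if and only if e_{S∖I} lies in V_1, and the map x ↦ x + e_S is a bijection from V_0 onto V_1. -/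
/-! For a proper subset `I` of the cycle, every component of `I` is followed by a unique gap
`g ∉ I` with `g - 1 ∈ I`, so `|c(I)|` counts the steps of the cycle from `I` into `S ∖ I`.
Going once around, the cycle steps from `S ∖ I` into `I` equally often, hence
`|c(I)| = |c(S ∖ I)|`. Since the component sizes add up to `|I|`, we have
`|c^0(I)| ≡ |c(I)| + |I| (mod 2)`, and therefore
`|c^0(I)| + |c^0(S ∖ I)| ≡ |I| + |S ∖ I| = N ≡ 1`. Finally `x ↦ x + e_S` maps `e_I` to
`e_{S ∖ I}`, which turns the parity statement into the bijection `V_0 → V_1`. -/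

open Finset Relation

section Components

variable {S : Type} {adj : S → S → Prop} {I : Finset S} {s t : S}

abbrev inducedAdj (adj : S → S → Prop) (I : Finset S) (a b : S) : Prop :=
  a ∈ I ∧ b ∈ I ∧ adj a b

instance [Std.Symm adj] : Std.Symm (inducedAdj adj I) :=
  ⟨fun _ _ ⟨ha, hb, hab⟩ => ⟨hb, ha, Std.Symm.symm _ _ hab⟩⟩

variable [DecidableEq S]

lemma mem_compOf : t ∈ compOf adj I s ↔ t ∈ I ∧ ReflTransGen (inducedAdj adj I) s t := by
  simp [compOf]

lemma mem_compOf_of_reflTransGen (hs : s ∈ I)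
    (h : ReflTransGen (inducedAdj adj I) s t) : t ∈ compOf adj I s := by
  refine mem_compOf.2 ⟨?_, h⟩
  rcases h.cases_tail with rfl | ⟨_, -, -, ht, -⟩
  exacts [hs, ht]

lemma compOf_eq_compOf_iff [Std.Symm adj] (hs : s ∈ I) :
    compOf adj I s = compOf adj I t ↔ ReflTransGen (inducedAdj adj I) s t := by
  refine ⟨fun h => Std.Symm.symm _ _ (mem_compOf.1 (h ▸ mem_compOf.2 ⟨hs, .refl⟩)).2,
    fun h => ?_⟩
  ext u
  simp only [mem_compOf]
  exact and_congr_right fun _ => ⟨(Std.Symm.symm _ _ h).trans, h.trans⟩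

lemma sum_card_comps [Std.Symm adj] : ∑ C ∈ comps adj I, #C = #I := by
  rw [card_eq_sum_card_image (compOf adj I) I, comps]
  refine sum_congr rfl fun C hC => ?_
  obtain ⟨s, hs, rfl⟩ := mem_image.1 hC
  congr 1
  ext t
  rw [mem_filter, eq_comm, compOf_eq_compOf_iff hs, mem_compOf]

lemma natCast_c0card [Std.Symm adj] :
    (c0card adj I : ZMod 2) = #(comps adj I) + #I := by
  have hcard : (#I : ZMod 2) = #{C ∈ comps adj I | ¬ Even #C} := by
    rw [← sum_card_comps (adj := adj), Nat.cast_sum, natCast_card_filter]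
    refine sum_congr rfl fun C _ => ?_
    split_ifs with h
    · exact ZMod.natCast_eq_zero_iff_even.2 h
    · exact ZMod.natCast_eq_one_iff_odd.2 (Nat.not_even_iff_odd.1 h)
  rw [hcard, c0card, ← card_filter_add_card_filter_not (s := comps adj I) (fun C => Even #C)]
  push_cast
  rw [add_assoc, CharTwo.add_self_eq_zero, add_zero]

end Components

lemma card_filter_mem_compl_eq {α : Type} [Fintype α] [DecidableEq α] (σ : Equiv.Perm α)
    (s : Finset α) : #{x ∈ sᶜ | σ x ∈ s} = #{x ∈ s | σ x ∉ s} := by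
  have h₁ := card_filter_add_card_filter_not (s := s) (σ · ∈ s)
  have h₂ : #{x ∈ s | σ x ∈ s} + #{x ∈ sᶜ | σ x ∈ s} = #s := by
    rw [← card_union_of_disjoint (disjoint_filter_filter disjoint_compl_right), ← filter_union,
      union_compl, ← card_map σ.symm.toEmbedding (s := s)]
    congr 1
    ext x
    simp
  omega

instance inst_s5 (N : ℕ) : Std.Symm (cadj N) := ⟨fun _ _ h => h.symm⟩

section Cycle

variable {N : ℕ} {I : Finset (ZMod N)} {x g : ZMod N}

noncomputable def gapDist (I : Finset (ZMod N)) (x : ZMod N) : ℕ := sInf {m : ℕ | x + m ∉ I}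

noncomputable def firstGap (I : Finset (ZMod N)) (x : ZMod N) : ZMod N := x + gapDist I x

lemma firstGap_of_notMem (hx : x ∉ I) : firstGap I x = x := by
  rw [firstGap, gapDist, Nat.sInf_eq_zero.2 (.inl (by simpa using hx)), Nat.cast_zero, add_zero]

variable [NeZero N]

lemma gapDist_set_nonempty (hI : I ≠ univ) (x : ZMod N) : {m : ℕ | x + m ∉ I}.Nonempty := by
  obtain ⟨u, hu⟩ : ∃ u, u ∉ I := by simpa [eq_univ_iff_forall] using hI
  exact ⟨(u - x).val, by simpa using hu⟩

lemma firstGap_notMem (hI : I ≠ univ) (x : ZMod N) : firstGap I x ∉ I :=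
  Nat.sInf_mem (gapDist_set_nonempty hI x)

lemma gapDist_of_mem (hI : I ≠ univ) (hx : x ∈ I) : gapDist I x = gapDist I (x + 1) + 1 := by
  have hpos : 1 ≤ gapDist I x := by
    rw [Nat.one_le_iff_ne_zero, gapDist, Ne, Nat.sInf_eq_zero, not_or]
    exact ⟨by simpa using hx, (gapDist_set_nonempty hI x).ne_empty⟩
  rw [gapDist, gapDist, ← Nat.sInf_add hpos]
  congr 3
  ext m
  rw [Nat.cast_succ, add_comm (m : ZMod N), add_assoc]

lemma firstGap_add_one (hI : I ≠ univ) (hx : x ∈ I) : firstGap I (x + 1) = firstGap I x := by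
  rw [firstGap, firstGap, gapDist_of_mem hI hx, Nat.cast_succ]
  ring

lemma firstGap_sub_one (hI : I ≠ univ) (hg : g ∉ I) (hg₁ : g - 1 ∈ I) :
    firstGap I (g - 1) = g := by
  rw [← firstGap_add_one hI hg₁, sub_add_cancel, firstGap_of_notMem hg]

lemma firstGap_eq_of_reflTransGen {y : ZMod N} (hI : I ≠ univ)
    (h : ReflTransGen (inducedAdj (cadj N) I) x y) :
    firstGap I x = firstGap I y := by
  induction h with
  | refl => rfl
  | tail _ hbc ih =>
    obtain ⟨hb, hc, rfl | rfl⟩ := hbc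
    · rw [ih, firstGap_add_one hI hb]
    · rw [ih, firstGap_add_one hI hc]

lemma reflTransGen_firstGap_sub_one (hI : I ≠ univ) (hx : x ∈ I) :
    ReflTransGen (inducedAdj (cadj N) I) x (firstGap I x - 1) := by
  induction hd : gapDist I x generalizing x with
  | zero => exact absurd (gapDist_of_mem hI hx ▸ hd) (Nat.succ_ne_zero _)
  | succ d ih =>
    by_cases hx₁ : x + 1 ∈ I
    · rw [gapDist_of_mem hI hx, Nat.succ_inj] at hd
      rw [← firstGap_add_one hI hx]
      exact .head ⟨hx, hx₁, .inl rfl⟩ (ih hx₁ hd)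
    · rw [← firstGap_add_one hI hx, firstGap_of_notMem hx₁, add_sub_cancel_right]

lemma card_comps_cadj (hI : I ≠ univ) : #(comps (cadj N) I) = #{g ∈ Iᶜ | g - 1 ∈ I} := by
  symm
  refine card_bij (fun g _ => compOf (cadj N) I (g - 1)) (fun g hg => ?_) (fun g hg g' hg' h => ?_)
    (fun C hC => ?_)
  · exact mem_image_of_mem _ (mem_filter.1 hg).2
  · rw [mem_filter, mem_compl] at hg hg'
    have := firstGap_eq_of_reflTransGen hI ((compOf_eq_compOf_iff hg.2).1 h)
    rwa [firstGap_sub_one hI hg.1 hg.2, firstGap_sub_one hI hg'.1 hg'.2] at this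
  · obtain ⟨x, hx, rfl⟩ := mem_image.1 hC
    have hreach := reflTransGen_firstGap_sub_one hI hx
    refine ⟨firstGap I x, mem_filter.2 ⟨mem_compl.2 (firstGap_notMem hI x), ?_⟩,
      ((compOf_eq_compOf_iff hx).2 hreach).symm⟩
    exact (mem_compOf.1 (mem_compOf_of_reflTransGen hx hreach)).1

lemma card_comps_compl_cadj (h₀ : I ≠ ∅) (hI : I ≠ univ) :
    #(comps (cadj N) Iᶜ) = #(comps (cadj N) I) := by
  rw [card_comps_cadj ((compl_eq_univ_iff I).not.2 h₀), card_comps_cadj hI, compl_compl]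
  simp only [mem_compl]
  exact (card_filter_mem_compl_eq (Equiv.subRight 1) I).symm

theorem odd_c0card_add_c0card_compl (hodd : Odd N) (h₀ : I ≠ ∅) (hI : I ≠ univ) :
    Odd (c0card (cadj N) I + c0card (cadj N) Iᶜ) := by
  rw [← ZMod.natCast_eq_one_iff_odd, Nat.cast_add, natCast_c0card, natCast_c0card,
    card_comps_compl_cadj h₀ hI]
  have hcard : (#I : ZMod 2) + #Iᶜ = 1 := by
    rw [← Nat.cast_add, card_add_card_compl, ZMod.card, ZMod.natCast_eq_one_iff_odd]
    exact hodd
  calc _ = (#(comps (cadj N) I) + #(comps (cadj N) I) : ZMod 2) + (#I + #Iᶜ) := by ring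
    _ = 1 := by rw [CharTwo.add_self_eq_zero, hcard, zero_add]

end Cycle

lemma eSum_add_eSum_univ {S V : Type} [Fintype S] [DecidableEq S] [AddCommGroup V]
    [Module (ZMod 2) V] (e : S → V) (I : Finset S) : eSum e I + eSum e univ = eSum e Iᶜ := by
  rw [eSum, eSum, eSum, ← sum_add_sum_compl I e, ← add_assoc, ← two_smul (ZMod 2),
    show (2 : ZMod 2) = 0 from rfl, zero_smul, zero_add]

section Vectors

variable {N : ℕ}

lemma eSum_eVec_apply (I : Finset (ZMod N)) (t : ZMod N) :
    eSum (eVec N) I t = if t ∈ I then 1 else 0 := by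
  simp [eSum, eVec, Finset.sum_apply, Pi.single_apply]

lemma eSum_eVec_injective : Function.Injective (eSum (eVec N)) := fun I J h => by
  ext t
  have := congrFun h t
  rw [eSum_eVec_apply, eSum_eVec_apply] at this
  split_ifs at this <;> simp_all

variable [NeZero N]

lemma eSum_eVec_surjective : Function.Surjective (eSum (eVec N)) := fun v =>
  ⟨({t | v t = 1} : Finset _), funext fun t => by
    simp only [eSum_eVec_apply, mem_filter_univ]
    generalize v t = a
    fin_cases a <;> rfl⟩

lemma eSum_eVec_mem_V0set_iff (I : Finset (ZMod N)) :
    eSum (eVec N) I ∈ V0set N ↔ I ≠ univ ∧ Even (c0card (cadj N) I) := by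
  simp [V0set, eSum_eVec_injective.eq_iff]

lemma eSum_eVec_mem_V1set_iff (I : Finset (ZMod N)) :
    eSum (eVec N) I ∈ V1set N ↔
      I = univ ∨ I ≠ ∅ ∧ I ≠ univ ∧ Odd (c0card (cadj N) I) := by
  simp [V1set, eSum_eVec_injective.eq_iff]

theorem eSum_eVec_mem_V0set_iff_compl (hodd : Odd N) (I : Finset (ZMod N)) :
    eSum (eVec N) I ∈ V0set N ↔ eSum (eVec N) Iᶜ ∈ V1set N := by
  simp only [eSum_eVec_mem_V0set_iff, eSum_eVec_mem_V1set_iff, compl_eq_univ_iff, Ne,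
    compl_eq_empty_iff]
  by_cases h₀ : I = ∅
  · simp [h₀, c0card, comps, univ_nonempty.ne_empty.symm]
  by_cases hI : I = univ
  · simp [hI, univ_nonempty.ne_empty]
  simp only [h₀, hI, false_or, not_false_eq_true, true_and]
  exact (Nat.odd_add'.1 (odd_c0card_add_c0card_compl hodd h₀ hI)).symm

end Vectors

theorem statement5_general (N : ℕ) [NeZero N] (hodd : Odd N) :
    (∀ I : Finset (ZMod N), I ≠ ∅ → I ≠ Finset.univ →
      Odd (c0card (cadj N) I + c0card (cadj N) (Finset.univ \ I))) ∧
    (∀ I : Finset (ZMod N), I ≠ ∅ → I ≠ Finset.univ →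
      (eSum (eVec N) I ∈ V0set N ↔ eSum (eVec N) (Finset.univ \ I) ∈ V1set N)) ∧
    Set.BijOn (fun x => x + eSum (eVec N) Finset.univ) (V0set N) (V1set N) := by
  simp only [← compl_eq_univ_sdiff]
  have key := eSum_eVec_mem_V0set_iff_compl hodd
  refine ⟨fun I h₀ hI => odd_c0card_add_c0card_compl hodd h₀ hI, fun I _ _ => key I,
    fun x hx => ?_, fun _ _ _ _ => add_right_cancel, fun y hy => ?_⟩
  · obtain ⟨I, rfl⟩ := eSum_eVec_surjective x
    simp only [eSum_add_eSum_univ]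
    exact (key I).1 hx
  · obtain ⟨I, rfl⟩ := eSum_eVec_surjective y
    refine ⟨eSum (eVec N) Iᶜ, (key Iᶜ).2 (by rwa [compl_compl]), ?_⟩
    simp only [eSum_add_eSum_univ, compl_compl]

/-- `|c^0(I)| + |c^0(S∖I)|` is odd for `∅ ≠ I ⊊ S`; consequently
`e_I ∈ V_0 ↔ e_{S∖I} ∈ V_1`, and `x ↦ x + e_S` is a bijection `V_0 → V_1`. -/
theorem statement5 (N : ℕ) [NeZero N] (hN : 3 ≤ N) (hodd : Odd N) :
    (∀ I : Finset (ZMod N), I ≠ ∅ → I ≠ Finset.univ →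
      Odd (c0card (cadj N) I + c0card (cadj N) (Finset.univ \ I))) ∧
    (∀ I : Finset (ZMod N), I ≠ ∅ → I ≠ Finset.univ →
      (eSum (eVec N) I ∈ V0set N ↔ eSum (eVec N) (Finset.univ \ I) ∈ V1set N)) ∧
    Set.BijOn (fun x => x + eSum (eVec N) Finset.univ) (V0set N) (V1set N) :=
  statement5_general N hodd
end

section
/- Let N ≥ 3 be odd and let (S,E) be the cycle of length N. Then every B in phi satisfies |B| ≤ (N−1)/2. -/
/-!
Every member of `B` is an arc `{a, a + 1, …, a + c - 1}` of the cycle with `0 < c < N`, and has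
the two boundary edges `{a - 1, a}` and `{a + c - 1, a + c}`. If two members of `B` shared a
boundary edge, either at the same side or as the end of one and the start of the other, then
either they would coincide or one of the sets that (P0) requires to be disconnected (their
union, or a difference of the two) would be an arc. So the `2 |B|` boundary edges are distinct
edges of the cycle, whence `2 |B| ≤ N`, and `N` is odd.
-/

lemma two_mul_card_le_card_of_injOn {α β : Type*} [Fintype β] [DecidableEq β] {B : Finset α}
    {f g : α → β} (hf : Set.InjOn f B) (hg : Set.InjOn g B) (hfg : ∀ x ∈ B, ∀ y ∈ B, f x ≠ g y) :
    2 * B.card ≤ Fintype.card β := by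
  have hdisj : Disjoint (B.image f) (B.image g) := by
    simp only [Finset.disjoint_left, Finset.mem_image]
    rintro _ ⟨x, hx, rfl⟩ ⟨y, hy, hxy⟩
    exact hfg x hx y hy hxy.symm
  calc 2 * B.card = (B.image f ∪ B.image g).card := by
        rw [Finset.card_union_of_disjoint hdisj, Finset.card_image_of_injOn hf,
          Finset.card_image_of_injOn hg, two_mul]
    _ ≤ Fintype.card β := Finset.card_le_univ _

/-- The relation that (P0) requires between any two members of `B`. -/
def Compatible {S : Type} [DecidableEq S] (adj : S → S → Prop) (I I' : Finset S) : Prop :=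
  I = I' ∨ Spade adj I I' ∨ Prec adj I I' ∨ Prec adj I' I

lemma connOn_empty {S : Type} {adj : S → S → Prop} : ConnOn adj ∅ := by
  simp [ConnOn]

section Compatible

variable {S : Type} [DecidableEq S] {adj : S → S → Prop} {I I' : Finset S}

lemma Compatible.symm (h : Compatible adj I I') : Compatible adj I' I := by
  rcases h with h | ⟨hinter, hunion⟩ | h | h
  · exact Or.inl h.symm
  · exact Or.inr (Or.inl ⟨by rwa [Finset.inter_comm], by rwa [Finset.union_comm]⟩)
  · exact Or.inr (Or.inr (Or.inr h))
  · exact Or.inr (Or.inr (Or.inl h))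

lemma Compatible.eq_of_connOn (h : Compatible adj I I') (hunion : ConnOn adj (I ∪ I'))
    (hsdiff : ConnOn adj (I \ I')) (hsdiff' : ConnOn adj (I' \ I)) : I = I' := by
  rcases h with h | h | h | h
  · exact h
  · exact absurd hunion h.2
  · exact absurd hsdiff' h.2
  · exact absurd hsdiff h.2

end Compatible

def arc {N : ℕ} (a : ZMod N) (c : ℕ) : Finset (ZMod N) :=
  (Finset.range c).image fun k : ℕ => a + (k : ZMod N)

section Arc

variable {N : ℕ} {a a' : ZMod N} {c c' d k : ℕ}

lemma mem_arc {x : ZMod N} : x ∈ arc a c ↔ ∃ k < c, a + k = x := by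
  simp [arc]

lemma self_mem_arc (hc : 0 < c) : a ∈ arc a c :=
  mem_arc.2 ⟨0, hc, by simp⟩

lemma add_natCast_mem_arc_iff (hk : k < N) (hc : c ≤ N) : a + k ∈ arc a c ↔ k < c := by
  simp only [mem_arc, add_right_inj, ZMod.natCast_eq_natCast_iff' _ _ N]
  refine ⟨?_, fun h => ⟨k, h, rfl⟩⟩
  rintro ⟨j, hj, h⟩
  rw [Nat.mod_eq_of_lt hk, Nat.mod_eq_of_lt (by omega)] at h
  omega

lemma arc_add (a : ZMod N) (c d : ℕ) : arc a (c + d) = arc a c ∪ arc (a + c) d := by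
  ext x
  simp only [Finset.mem_union, mem_arc]
  constructor
  · rintro ⟨k, hk, rfl⟩
    rcases lt_or_ge k c with h | h
    · exact Or.inl ⟨k, h, rfl⟩
    · exact Or.inr ⟨k - c, by omega, by rw [add_assoc, ← Nat.cast_add, Nat.add_sub_cancel' h]⟩
  · rintro (⟨k, hk, rfl⟩ | ⟨k, hk, rfl⟩)
    · exact ⟨k, by omega, rfl⟩
    · exact ⟨c + k, by omega, by push_cast; ring⟩

lemma disjoint_arc_arc_add (h : c + d ≤ N) : Disjoint (arc a c) (arc (a + c) d) := by
  rw [Finset.disjoint_right]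
  intro x hx
  obtain ⟨k, hk, rfl⟩ := mem_arc.1 hx
  rw [add_assoc, ← Nat.cast_add, add_natCast_mem_arc_iff (by omega) (by omega)]
  omega

lemma connOn_arc (a : ZMod N) (c : ℕ) : ConnOn (cadj N) (arc a c) := by
  let R := fun x y => x ∈ arc a c ∧ y ∈ arc a c ∧ cadj N x y
  have : Std.Symm R := ⟨fun _ _ ⟨hx, hy, h⟩ => ⟨hy, hx, h.symm⟩⟩
  have hreach : ∀ k < c, Relation.ReflTransGen R a (a + k) := by
    intro k
    induction k with
    | zero => intro _; simpa using Relation.ReflTransGen.refl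
    | succ k ih =>
      intro hk
      refine (ih (by omega)).tail ⟨mem_arc.2 ⟨k, by omega, rfl⟩, mem_arc.2 ⟨k + 1, hk, rfl⟩, ?_⟩
      exact Or.inl (by push_cast; ring)
  intro s hs t ht
  obtain ⟨i, hi, rfl⟩ := mem_arc.1 hs
  obtain ⟨j, hj, rfl⟩ := mem_arc.1 ht
  exact (Std.Symm.symm _ _ (hreach i hi)).trans (hreach j hj)

lemma Compatible.arc_eq_of_start_eq (h : Compatible (cadj N) (arc a c) (arc a c'))
    (hc : c ≤ N) (hc' : c' ≤ N) : arc a c = arc a c' := by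
  wlog hle : c ≤ c' generalizing c c'
  · exact (this h.symm hc' hc (by omega)).symm
  obtain ⟨d, rfl⟩ := Nat.exists_eq_add_of_le hle
  have hsub : arc a c ⊆ arc a (c + d) := by
    rw [arc_add]
    exact Finset.subset_union_left
  apply h.eq_of_connOn
  · rw [Finset.union_eq_right.2 hsub]
    exact connOn_arc a _
  · rw [Finset.sdiff_eq_empty_iff_subset.2 hsub]
    exact connOn_empty
  · rw [arc_add, Finset.union_sdiff_cancel_left (disjoint_arc_arc_add hc')]
    exact connOn_arc _ _

lemma Compatible.arc_eq_of_end_eq (h : Compatible (cadj N) (arc a c) (arc a' c'))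
    (hend : a + c = a' + c') (hc : c ≤ N) (hc' : c' ≤ N) : arc a c = arc a' c' := by
  wlog hle : c ≤ c' generalizing a a' c c'
  · exact (this h.symm hend.symm hc' hc (by omega)).symm
  obtain ⟨d, rfl⟩ := Nat.exists_eq_add_of_le hle
  obtain rfl : a = a' + d := by push_cast at hend; linear_combination hend
  have hsplit : arc a' (c + d) = arc a' d ∪ arc (a' + d) c := by rw [add_comm, arc_add]
  rw [hsplit] at h ⊢
  apply h.eq_of_connOn
  · rw [Finset.union_eq_right.2 Finset.subset_union_right, ← hsplit]
    exact connOn_arc _ _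
  · rw [Finset.sdiff_eq_empty_iff_subset.2 Finset.subset_union_right]
    exact connOn_empty
  · rw [Finset.union_sdiff_cancel_right (disjoint_arc_arc_add (by omega))]
    exact connOn_arc _ _

lemma not_compatible_arc_add_arc (hc : 0 < c) (hcN : c < N) (hc' : 0 < c') (hc'N : c' < N) :
    ¬ Compatible (cadj N) (arc (a + c') c) (arc a c') := by
  have hstart : a + c' ∉ arc a c' := by
    rw [add_natCast_mem_arc_iff hc'N hc'N.le]
    exact lt_irrefl _
  have hlast : a + ((c' - 1 : ℕ) : ZMod N) ∉ arc (a + (c' : ZMod N)) c := by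
    have : a + ((c' - 1 : ℕ) : ZMod N) = a + c' + ((N - 1 : ℕ) : ZMod N) := by
      rw [Nat.cast_sub (by omega), Nat.cast_sub (by omega), ZMod.natCast_self]
      ring
    rw [this, add_natCast_mem_arc_iff (by omega) hcN.le]
    omega
  rintro (h | h | h | h)
  · exact hstart (h ▸ self_mem_arc hc)
  · exact h.2 (by rw [Finset.union_comm, ← arc_add]; exact connOn_arc _ _)
  · exact hstart (h.1.subset (self_mem_arc hc))
  · exact hlast (h.1.subset (mem_arc.2 ⟨c' - 1, by omega, rfl⟩))

lemma arc_eq_image_univ {n : ℕ} {f : Fin n → ZMod N} {a : ZMod N}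
    (hf : ∀ i, f i = a + (i : ℕ)) : Finset.univ.image f = arc a n := by
  rw [arc, ← Finset.image_fin_univ, Finset.image_image]
  exact Finset.image_congr fun i _ => hf i

lemma exists_unit_step_of_path {m : ℕ} {f : Fin (m + 1) → ZMod N} (hinj : Function.Injective f)
    (hadj : ∀ i j : Fin (m + 1), cadj N (f i) (f j) ↔ ((i : ℕ) + 1 = j ∨ (j : ℕ) + 1 = i)) :
    ∃ ε : ZMod N, (ε = 1 ∨ ε = -1) ∧ ∀ i : Fin (m + 1), f i = f 0 + (i : ℕ) * ε := by
  have hstep : ∀ i : Fin m, f i.succ = f i.castSucc + 1 ∨ f i.succ = f i.castSucc - 1 := by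
    intro i
    rcases (hadj i.castSucc i.succ).2 (Or.inl (by simp)) with h | h
    · exact Or.inl h
    · exact Or.inr (by rw [h]; ring)
  suffices ∃ ε : ZMod N, (ε = 1 ∨ ε = -1) ∧ ∀ i : Fin m, f i.succ = f i.castSucc + ε by
    obtain ⟨ε, hε, hconst⟩ := this
    refine ⟨ε, hε, Fin.induction (by simp) fun i ih => ?_⟩
    rw [hconst, ih, Fin.val_succ, Fin.val_castSucc]
    push_cast
    ring
  cases m with
  | zero => exact ⟨1, Or.inl rfl, fun i => i.elim0⟩
  | succ n =>
    obtain ⟨ε, hε, h0⟩ : ∃ ε : ZMod N, (ε = 1 ∨ ε = -1) ∧ f 1 = f 0 + ε := by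
      rcases hstep 0 with h | h
      · exact ⟨1, Or.inl rfl, h⟩
      · exact ⟨-1, Or.inr rfl, by rw [← sub_eq_add_neg]; exact h⟩
    refine ⟨ε, hε, Fin.induction h0 fun i ih => ?_⟩
    have hback : f i.succ.succ ≠ f i.castSucc.castSucc := fun h => by
      have := congrArg Fin.val (hinj h)
      simp only [Fin.val_succ, Fin.val_castSucc] at this
      omega
    rw [← Fin.succ_castSucc]
    rcases hstep i.succ with h | h <;> rw [← Fin.succ_castSucc] at h <;>
      rcases hε with rfl | rfl
    · exact h
    · exact absurd (by rw [h, ih]; ring) hback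
    · exact absurd (by rw [h, ih]; ring) hback
    · rw [h]; ring

lemma exists_arc_of_isPathOn [NeZero N] (hN : N ≠ 2) {I : Finset (ZMod N)}
    (hI : IsPathOn (cadj N) I) : ∃ a c, 0 < c ∧ c < N ∧ I = arc a c := by
  obtain ⟨m, f, hinj, rfl, hadj⟩ := hI
  obtain ⟨ε, hε, hf⟩ := exists_unit_step_of_path hinj hadj
  have hmN : m + 1 < N := by
    have hle : m + 1 ≤ N := by simpa using Fintype.card_le_of_injective f hinj
    refine lt_of_le_of_ne hle fun hm => hN ?_
    -- otherwise the two ends of the path would be adjacent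
    have hm' : (m : ZMod N) = -1 := by
      have : ((m + 1 : ℕ) : ZMod N) = 0 := by rw [hm, ZMod.natCast_self]
      push_cast at this
      linear_combination this
    have hends : cadj N (f 0) (f (Fin.last m)) := by
      rw [hf (Fin.last m), Fin.val_last, hm']
      rcases hε with rfl | rfl
      · exact Or.inr (by ring)
      · exact Or.inl (by ring)
    have := (hadj 0 (Fin.last m)).1 hends
    rw [Fin.val_zero, Fin.val_last] at this
    omega
  rcases hε with rfl | rfl
  · exact ⟨f 0, m + 1, m.succ_pos, hmN, arc_eq_image_univ fun i => by rw [hf, mul_one]⟩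
  · refine ⟨f 0 - m, m + 1, m.succ_pos, hmN, ?_⟩
    rw [← Finset.image_univ_equiv Fin.revPerm, Finset.image_image]
    refine arc_eq_image_univ fun i => ?_
    rw [Function.comp_apply, Fin.revPerm_apply, hf, Fin.val_rev, Nat.cast_sub (by omega)]
    push_cast
    ring

end Arc

lemma two_mul_card_le_of_compatible_arcs {N : ℕ} [NeZero N] {B : Finset (Finset (ZMod N))}
    (harcs : ∀ I ∈ B, ∃ a c, 0 < c ∧ c < N ∧ I = arc a c)
    (hcompat : ∀ I ∈ B, ∀ J ∈ B, Compatible (cadj N) I J) :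
    2 * B.card ≤ N := by
  choose! a c hc hcN harc using harcs
  replace hcompat : ∀ I ∈ B, ∀ J ∈ B,
      Compatible (cadj N) (arc (a I) (c I)) (arc (a J) (c J)) := by
    intro I hI J hJ
    rw [← harc I hI, ← harc J hJ]
    exact hcompat I hI J hJ
  have heq : ∀ I ∈ B, ∀ J ∈ B, arc (a I) (c I) = arc (a J) (c J) → I = J :=
    fun I hI J hJ h => (harc I hI).trans (h.trans (harc J hJ).symm)
  -- a boundary edge `{x - 1, x}` is recorded by `x`
  refine (two_mul_card_le_card_of_injOn (f := a) (g := fun I => a I + c I) ?_ ?_ ?_).trans_eq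
    (ZMod.card N)
  · intro I hI J hJ h
    have hIJ := hcompat I hI J hJ
    rw [← h] at hIJ
    exact heq I hI J hJ (h ▸ hIJ.arc_eq_of_start_eq (hcN I hI).le (hcN J hJ).le)
  · exact fun I hI J hJ h => heq I hI J hJ <|
      (hcompat I hI J hJ).arc_eq_of_end_eq h (hcN I hI).le (hcN J hJ).le
  · intro I hI J hJ h
    apply not_compatible_arc_add_arc (hc I hI) (hcN I hI) (hc J hJ) (hcN J hJ)
    rw [← h]
    exact hcompat I hI J hJ

/-- every `B ∈ phi` satisfies `|B| ≤ (N-1)/2`. -/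
theorem statement11 (N : ℕ) [NeZero N] (hN : 3 ≤ N) (hodd : Odd N)
    (B : Finset (Finset (ZMod N))) (hB : B ∈ phiSet (cadj N)) :
    B.card ≤ (N - 1) / 2 := by
  obtain ⟨hpath, hP0, -⟩ := hB
  have hcard : 2 * B.card ≤ N := two_mul_card_le_of_compatible_arcs
    (fun I hI => exists_arc_of_isPathOn (by omega) (hpath I hI).1) hP0
  obtain ⟨t, rfl⟩ := hodd
  omega
end
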